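/- arXiv:1909.03125 — 4 statements merged into one kernel-verified Lean document; each statement's English description precedes it below -/
import Mathlib

section
/- Let A --f--> B --g--> C be a pair of composable morphisms in an abelian category. Then the canonical six-term sequence 0 → ker f → ker(g∘f) → ker g → coker f → coker(g∘f) → coker g → 0 is exact, where: the map ker f → ker(g∘f) is the one induced by the identity of A (both being subobjects of A); the map ker(g∘f) → ker g is induced by f; the map ker g → coker f is the composite of the inclusion ker g → B with the projection B → coker f; the map coker f → coker(g∘f) is induced by g; and the map coker(g∘f) → coker g is induced by the identity of C. -/
open CategoryTheory CategoryTheory.Limits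

attribute [local instance] CategoryTheory.Abelian.Pseudoelement.objectToSort
  CategoryTheory.Abelian.Pseudoelement.homToFun

open CategoryTheory.Abelian

/-- **Kernel–cokernel six-term exact sequence.**
Given composable morphisms `f : A ⟶ B` and `g : B ⟶ X` in an abelian category,
the canonical sequence
`0 → ker f → ker (f ≫ g) → ker g → coker f → coker (f ≫ g) → coker g → 0`
is exact, where the maps are the canonical ones:
`k₁` is induced by the identity of `A`, `k₂` is induced by `f`, `k₃` is the
composite of the inclusion `ker g ⟶ B` with the projection `B ⟶ coker f`,
`c₁` is induced by `g`, and `c₂` is induced by the identity of `X`. -/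
theorem six_term_kernel_cokernel_exact
    {𝒞 : Type*} [Category 𝒞] [Abelian 𝒞] {A B X : 𝒞} (f : A ⟶ B) (g : B ⟶ X)
    (k₁ : kernel f ⟶ kernel (f ≫ g))
    (hk₁ : k₁ ≫ kernel.ι (f ≫ g) = kernel.ι f)
    (k₂ : kernel (f ≫ g) ⟶ kernel g)
    (hk₂ : k₂ ≫ kernel.ι g = kernel.ι (f ≫ g) ≫ f)
    (k₃ : kernel g ⟶ cokernel f)
    (hk₃ : k₃ = kernel.ι g ≫ cokernel.π f)
    (c₁ : cokernel f ⟶ cokernel (f ≫ g))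
    (hc₁ : cokernel.π f ≫ c₁ = g ≫ cokernel.π (f ≫ g))
    (c₂ : cokernel (f ≫ g) ⟶ cokernel g)
    (hc₂ : cokernel.π (f ≫ g) ≫ c₂ = cokernel.π g) :
    Mono k₁ ∧
    (ShortComplex.mk k₁ k₂ (by
      rw [← cancel_mono (kernel.ι g), Category.assoc, hk₂, ← Category.assoc, hk₁,
        kernel.condition, zero_comp])).Exact ∧
    (ShortComplex.mk k₂ k₃ (by
      rw [hk₃, ← Category.assoc, hk₂, Category.assoc, cokernel.condition,
        comp_zero])).Exact ∧
    (ShortComplex.mk k₃ c₁ (by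
      rw [hk₃, Category.assoc, hc₁, ← Category.assoc, kernel.condition,
        zero_comp])).Exact ∧
    (ShortComplex.mk c₁ c₂ (by
      rw [← cancel_epi (cokernel.π f), ← Category.assoc, hc₁, Category.assoc, hc₂,
        cokernel.condition, comp_zero])).Exact ∧
    Epi c₂ := by
  have Hkf := Pseudoelement.pseudo_exact_of_exact (ShortComplex.exact_kernel f)
  have Hkfg := Pseudoelement.pseudo_exact_of_exact (ShortComplex.exact_kernel (f ≫ g))
  have Hkg := Pseudoelement.pseudo_exact_of_exact (ShortComplex.exact_kernel g)
  have Hcf := Pseudoelement.pseudo_exact_of_exact (ShortComplex.exact_cokernel f)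
  have Hcfg := Pseudoelement.pseudo_exact_of_exact (ShortComplex.exact_cokernel (f ≫ g))
  have Hcg := Pseudoelement.pseudo_exact_of_exact (ShortComplex.exact_cokernel g)
  refine ⟨mono_of_mono_fac hk₁, ?_, ?_, ?_, ?_, epi_of_epi_fac hc₂⟩
  · apply Pseudoelement.exact_of_pseudo_exact
    intro b hb
    replace hb : Pseudoelement.pseudoApply k₂ b = 0 := hb
    show ∃ a, Pseudoelement.pseudoApply k₁ a = b
    have h1 : Pseudoelement.pseudoApply f
        (Pseudoelement.pseudoApply (kernel.ι (f ≫ g)) b) = 0 := by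
      rw [← Pseudoelement.comp_apply, ← hk₂, Pseudoelement.comp_apply, hb,
        Pseudoelement.apply_zero]
    obtain ⟨a, ha⟩ := Hkf _ h1
    replace ha : Pseudoelement.pseudoApply (kernel.ι f) a =
      Pseudoelement.pseudoApply (kernel.ι (f ≫ g)) b := ha
    refine ⟨a, Pseudoelement.pseudo_injective_of_mono (kernel.ι (f ≫ g)) ?_⟩
    rw [← Pseudoelement.comp_apply, hk₁, ha]
  · apply Pseudoelement.exact_of_pseudo_exact
    intro b hb
    replace hb : Pseudoelement.pseudoApply k₃ b = 0 := hb
    show ∃ a, Pseudoelement.pseudoApply k₂ a = b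
    rw [hk₃, Pseudoelement.comp_apply] at hb
    obtain ⟨a, ha⟩ := Hcf _ hb
    replace ha : Pseudoelement.pseudoApply f a =
      Pseudoelement.pseudoApply (kernel.ι g) b := ha
    have h2 : Pseudoelement.pseudoApply (f ≫ g) a = 0 := by
      rw [Pseudoelement.comp_apply, ha, ← Pseudoelement.comp_apply,
        kernel.condition, Pseudoelement.zero_apply]
    obtain ⟨a', ha'⟩ := Hkfg _ h2
    replace ha' : Pseudoelement.pseudoApply (kernel.ι (f ≫ g)) a' = a := ha'
    refine ⟨a', Pseudoelement.pseudo_injective_of_mono (kernel.ι g) ?_⟩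
    rw [← Pseudoelement.comp_apply, hk₂, Pseudoelement.comp_apply, ha', ha]
  · apply Pseudoelement.exact_of_pseudo_exact
    intro c hc
    replace hc : Pseudoelement.pseudoApply c₁ c = 0 := hc
    show ∃ w, Pseudoelement.pseudoApply k₃ w = c
    obtain ⟨b, hb⟩ := Pseudoelement.pseudo_surjective_of_epi (cokernel.π f) c
    have h1 : Pseudoelement.pseudoApply (cokernel.π (f ≫ g))
        (Pseudoelement.pseudoApply g b) = 0 := by
      rw [← Pseudoelement.comp_apply, ← hc₁, Pseudoelement.comp_apply, hb, hc]
    obtain ⟨a, ha⟩ := Hcfg _ h1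
    replace ha : Pseudoelement.pseudoApply (f ≫ g) a =
      Pseudoelement.pseudoApply g b := ha
    have h2 : Pseudoelement.pseudoApply g (Pseudoelement.pseudoApply f a) =
        Pseudoelement.pseudoApply g b := by
      rw [← Pseudoelement.comp_apply, ha]
    obtain ⟨z, hz0, hz⟩ := Pseudoelement.sub_of_eq_image g b
      (Pseudoelement.pseudoApply f a) h2.symm
    obtain ⟨w, hw⟩ := Hkg _ hz0
    replace hw : Pseudoelement.pseudoApply (kernel.ι g) w = z := hw
    refine ⟨w, ?_⟩
    rw [hk₃, Pseudoelement.comp_apply, hw,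
      hz _ (cokernel.π f) (by
        rw [← Pseudoelement.comp_apply, cokernel.condition, Pseudoelement.zero_apply]),
      hb]
  · apply Pseudoelement.exact_of_pseudo_exact
    intro c hc
    replace hc : Pseudoelement.pseudoApply c₂ c = 0 := hc
    show ∃ w, Pseudoelement.pseudoApply c₁ w = c
    obtain ⟨x, hx⟩ := Pseudoelement.pseudo_surjective_of_epi (cokernel.π (f ≫ g)) c
    have h1 : Pseudoelement.pseudoApply (cokernel.π g) x = 0 := by
      rw [← hc₂, Pseudoelement.comp_apply, hx, hc]
    obtain ⟨b, hb⟩ := Hcg _ h1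
    replace hb : Pseudoelement.pseudoApply g b = x := hb
    refine ⟨Pseudoelement.pseudoApply (cokernel.π f) b, ?_⟩
    rw [← Pseudoelement.comp_apply, hc₁, Pseudoelement.comp_apply, hb, hx]
end

section
/- Let B be an abelian group. For each positive integer n let B[n] = {x ∈ B : n·x = 0} be the n-torsion subgroup, and order the positive integers by divisibility, with transition map B[m] → B[n] for n ∣ m given by x ↦ (m/n)·x. Then the map sending an additive homomorphism h : ℚ/ℤ → B to the family (h(1/n + ℤ))_{n ≥ 1} is a group isomorphism from Hom(ℚ/ℤ, B) onto the inverse limit T B = lim_n B[n] of this system (i.e., onto the subgroup of ∏_n B[n] consisting of families (x_n) with x_n = (m/n)·x_m whenever n ∣ m). -/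
/-!
A homomorphism `h : ℚ/ℤ → B` is determined by the values `h (1/n)`, since
`h (a/n) = a • h (1/n)`; these values are `n`-torsion and compatible because `n • (1/n) = 1 = 0` and
`(m/n) • (1/m) = 1/n` in `ℚ/ℤ`. Conversely a compatible family `x` with `x 1 = 0` defines
`q ↦ num q • x (den q)` on `ℚ`. Compatibility makes this agree with `a • x n` for every presentation
`q = a/n`, which gives additivity (put `q` and `r` over the common denominator `den q * den r`),
and `x 1 = 0` makes it vanish on `ℤ`, so it descends to `ℚ/ℤ`.
-/

namespace AddCircle

variable {B : Type*} [AddCommGroup B]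

lemma map_coe_intCast_div (h : AddCircle (1 : ℚ) →+ B) (a : ℤ) (n : ℕ+) :
    h ((a / (n : ℕ) : ℚ) : AddCircle (1 : ℚ)) = a • h ((((n : ℕ) : ℚ)⁻¹ : ℚ) : AddCircle (1 : ℚ)) := by
  rw [← map_zsmul, ← coe_zsmul, zsmul_eq_mul, div_eq_mul_inv]

lemma nsmul_map_coe_inv (h : AddCircle (1 : ℚ) →+ B) (n : ℕ+) :
    (n : ℕ) • h ((((n : ℕ) : ℚ)⁻¹ : ℚ) : AddCircle (1 : ℚ)) = 0 := by
  have hn : ((n : ℕ) : ℚ) ≠ 0 := by exact_mod_cast n.ne_zero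
  rw [← natCast_zsmul, ← map_coe_intCast_div, Int.cast_natCast, div_self hn, coe_period, map_zero]

lemma map_coe_inv_eq_div_nsmul (h : AddCircle (1 : ℚ) →+ B) {n m : ℕ+} (hnm : (n : ℕ) ∣ (m : ℕ)) :
    h ((((n : ℕ) : ℚ)⁻¹ : ℚ) : AddCircle (1 : ℚ)) =
      ((m : ℕ) / (n : ℕ)) • h ((((m : ℕ) : ℚ)⁻¹ : ℚ) : AddCircle (1 : ℚ)) := by
  have hn : ((n : ℕ) : ℚ) ≠ 0 := by exact_mod_cast n.ne_zero
  rw [← natCast_zsmul, ← map_coe_intCast_div, Int.cast_natCast, Nat.cast_div hnm hn]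
  congr 2
  field_simp

lemma addMonoidHom_ext_of_map_coe_inv {h₁ h₂ : AddCircle (1 : ℚ) →+ B}
    (h : ∀ n : ℕ+, h₁ ((((n : ℕ) : ℚ)⁻¹ : ℚ) : AddCircle (1 : ℚ)) =
      h₂ ((((n : ℕ) : ℚ)⁻¹ : ℚ) : AddCircle (1 : ℚ))) :
    h₁ = h₂ := by
  ext q
  change h₁ (q : AddCircle (1 : ℚ)) = h₂ (q : AddCircle (1 : ℚ))
  have hq : q = q.num / ((q.pnatDen : ℕ) : ℚ) := by rw [Rat.coe_pnatDen, q.num_div_den]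
  rw [hq, map_coe_intCast_div, map_coe_intCast_div, h]

end AddCircle

section CompatibleFamily

variable {B : Type*} [AddCommGroup B] {x : ℕ+ → B}

def ratLift (x : ℕ+ → B) (q : ℚ) : B := q.num • x q.pnatDen

variable (hx : ∀ n m : ℕ+, (n : ℕ) ∣ (m : ℕ) → x n = ((m : ℕ) / (n : ℕ)) • x m)
include hx

lemma ratLift_intCast_div (a : ℤ) (n : ℕ+) : ratLift x (a / (n : ℕ)) = a • x n := by
  have hn : ((n : ℕ) : ℚ) ≠ 0 := by exact_mod_cast n.ne_zero
  have hden : ((a : ℚ) / (n : ℕ)).den ∣ (n : ℕ) := by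
    have := Rat.den_dvd a n
    rw [Rat.divInt_eq_div, Int.cast_natCast] at this
    exact_mod_cast this
  generalize hq : (a : ℚ) / (n : ℕ) = q at hden ⊢
  obtain ⟨k, hk⟩ := hden
  have ha : a = q.num * k := by
    have : (a : ℚ) = q * q.den * k := by
      rw [mul_assoc, ← Nat.cast_mul, ← hk, ← hq, div_mul_cancel₀ _ hn]
    rw [Rat.mul_den_eq_num] at this
    exact_mod_cast this
  have hdvd : (q.pnatDen : ℕ) ∣ (n : ℕ) := by rw [Rat.coe_pnatDen, hk]; exact dvd_mul_right _ _
  rw [ratLift, hx q.pnatDen n hdvd, Rat.coe_pnatDen, hk, Nat.mul_div_cancel_left _ q.den_pos,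
    ← natCast_zsmul, smul_smul, ha]

lemma ratLift_add (q r : ℚ) : ratLift x (q + r) = ratLift x q + ratLift x r := by
  set n : ℕ+ := q.pnatDen * r.pnatDen
  have hn : ((n : ℕ) : ℚ) = q.den * r.den := by simp [n, Rat.coe_pnatDen]
  have hn₀ : ((n : ℕ) : ℚ) ≠ 0 := by exact_mod_cast n.ne_zero
  have eval : ∀ (s : ℚ) (a : ℤ), s * (n : ℕ) = a → ratLift x s = a • x n := fun s a hs => by
    rw [← ratLift_intCast_div hx, ← hs, mul_div_cancel_right₀ _ hn₀]
  rw [eval q (q.num * r.den) (by rw [hn]; push_cast; rw [← q.mul_den_eq_num]; ring),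
    eval r (r.num * q.den) (by rw [hn]; push_cast; rw [← r.mul_den_eq_num]; ring),
    eval (q + r) (q.num * r.den + r.num * q.den)
      (by rw [hn]; push_cast; rw [← q.mul_den_eq_num, ← r.mul_den_eq_num]; ring),
    add_zsmul]

def ratLiftHom : ℚ →+ B := AddMonoidHom.mk' (ratLift x) (ratLift_add hx)

variable (hx₁ : x 1 = 0)
include hx₁

def circleLift : AddCircle (1 : ℚ) →+ B :=
  QuotientAddGroup.lift _ (ratLiftHom hx) fun z hz => by
    obtain ⟨k, rfl⟩ := AddSubgroup.mem_zmultiples_iff.mp hz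
    have := ratLift_intCast_div hx k 1
    rwa [PNat.one_coe, Nat.cast_one, div_one, hx₁, smul_zero, ← zsmul_one] at this

lemma circleLift_coe_inv (n : ℕ+) :
    circleLift hx hx₁ ((((n : ℕ) : ℚ)⁻¹ : ℚ) : AddCircle (1 : ℚ)) = x n := by
  have := ratLift_intCast_div hx 1 n
  rwa [Int.cast_one, one_div, one_smul] at this

end CompatibleFamily

/-- **The total Tate module as `Hom(ℚ/ℤ, B)`.**
Let `B` be an abelian group. For positive integers ordered by divisibility, with
transition maps `B[m] → B[n]`, `x ↦ (m/n) • x` for `n ∣ m`, the map sending an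
additive homomorphism `h : ℚ/ℤ → B` to the family `(h (1/n))_{n ≥ 1}` is a group
isomorphism from `Hom(ℚ/ℤ, B)` onto the inverse limit `T B = lim_n B[n]`, i.e.
it is additive, injective, its image consists of compatible families of torsion
elements, and every such compatible family arises this way.
Here `ℚ/ℤ` is realized as `AddCircle (1 : ℚ)`. -/
theorem homQZ_equiv_totalTateModule {B : Type*} [AddCommGroup B]
    (Φ : (AddCircle (1 : ℚ) →+ B) → (ℕ+ → B))
    (hΦ : ∀ (h : AddCircle (1 : ℚ) →+ B) (n : ℕ+),
      Φ h n = h ((((n : ℕ) : ℚ)⁻¹ : ℚ) : AddCircle (1 : ℚ))) :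
    (∀ (h : AddCircle (1 : ℚ) →+ B) (n : ℕ+), (n : ℕ) • Φ h n = 0) ∧
    (∀ (h : AddCircle (1 : ℚ) →+ B) (n m : ℕ+), (n : ℕ) ∣ (m : ℕ) →
      Φ h n = ((m : ℕ) / (n : ℕ)) • Φ h m) ∧
    (∀ h₁ h₂ : AddCircle (1 : ℚ) →+ B, Φ (h₁ + h₂) = Φ h₁ + Φ h₂) ∧
    Function.Injective Φ ∧
    (∀ x : ℕ+ → B, (∀ n : ℕ+, (n : ℕ) • x n = 0) →
      (∀ n m : ℕ+, (n : ℕ) ∣ (m : ℕ) → x n = ((m : ℕ) / (n : ℕ)) • x m) →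
      ∃ h : AddCircle (1 : ℚ) →+ B, Φ h = x) := by
  obtain rfl : Φ = fun h n => h ((((n : ℕ) : ℚ)⁻¹ : ℚ) : AddCircle (1 : ℚ)) := funext₂ hΦ
  refine ⟨AddCircle.nsmul_map_coe_inv, fun h _ _ => AddCircle.map_coe_inv_eq_div_nsmul h,
    fun _ _ => rfl, fun _ _ e => AddCircle.addMonoidHom_ext_of_map_coe_inv (congrFun e),
    fun x hx_tors hx => ?_⟩
  have hx₁ : x 1 = 0 := by simpa using hx_tors 1
  exact ⟨circleLift hx hx₁, funext (circleLift_coe_inv hx hx₁)⟩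
end

section
/- Let n be a positive integer, ι an index type, and a : ι → ℕ a family of positive integers such that a i divides n for every i and a i = 1 for all but finitely many i. Let Δ be the least common multiple of the a i and let P = ∏_i a i (a finite product, since all but finitely many factors equal 1). Let D : ℤ/nℤ → ∏_i ℤ/(a i)ℤ be the additive homomorphism whose i-th component is the natural reduction map. Then the cokernel of D is a finite abelian group of order P/Δ; equivalently, Nat.card(coker D) · Δ = ∏_i a i. -/
/-- **Cokernel of the diagonal map.**
Let `n` be a positive integer and `a : ι → ℕ` a family of positive divisors of `n`
with `a i = 1` for all but finitely many `i`.  Let `Δ` be the least common multiple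
of the `a i` (characterized by its universal property) and let
`D : ℤ/nℤ → ∏ i, ℤ/(a i)ℤ` be the homomorphism whose `i`-th component is the
natural reduction map.  Then the cokernel of `D` is a finite abelian group of
order `(∏ i, a i) / Δ`; equivalently, `Nat.card (coker D) * Δ = ∏ i, a i`
(a finite product, taken as `finprod`). -/
theorem card_coker_diagonal {ι : Type*} (n : ℕ) (hn : 0 < n)
    (a : ι → ℕ) (hapos : ∀ i, 0 < a i) (han : ∀ i, a i ∣ n)
    (hafin : {i | a i ≠ 1}.Finite)
    (Δ : ℕ) (hΔ₁ : ∀ i, a i ∣ Δ) (hΔ₂ : ∀ m : ℕ, (∀ i, a i ∣ m) → Δ ∣ m)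
    (D : ZMod n →+ ∀ i, ZMod (a i))
    (hD : ∀ (x : ZMod n) (i : ι), D x i = ZMod.castHom (han i) (ZMod (a i)) x) :
    Finite ((∀ i, ZMod (a i)) ⧸ D.range) ∧
    Nat.card ((∀ i, ZMod (a i)) ⧸ D.range) * Δ = ∏ᶠ i, a i := by
  classical
  haveI : ∀ i, NeZero (a i) := fun i => ⟨(hapos i).ne'⟩
  haveI : NeZero n := ⟨hn.ne'⟩
  have hΔn : Δ ∣ n := hΔ₂ n han
  have hΔpos : 0 < Δ := Nat.pos_of_dvd_of_pos hΔn hn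
  haveI : NeZero Δ := ⟨hΔpos.ne'⟩
  set S : Finset ι := hafin.toFinset with hS
  have hmemS : ∀ i, i ∈ S ↔ a i ≠ 1 := fun i => hafin.mem_toFinset
  haveI hU : ∀ i : {i // ¬ i ∈ S}, Unique (ZMod (a i.1)) := by
    intro i
    have : a i.1 = 1 := by
      have := i.2; rw [hmemS] at this; exact not_not.mp this
    rw [this]; infer_instance
  let E := Equiv.piEquivPiSubtypeProd (fun i => i ∈ S) (fun i => ZMod (a i))
  haveI : Finite (∀ i, ZMod (a i)) := Finite.of_equiv _ E.symm
  -- card of the whole product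
  have hcardPi : Nat.card (∀ i, ZMod (a i)) = ∏ᶠ i, a i := by
    have h1 : Nat.card ((i : { x // x ∉ S }) → ZMod (a i.1)) = 1 :=
      Nat.card_eq_one_iff_unique.mpr ⟨inferInstance, inferInstance⟩
    rw [Nat.card_congr E, Nat.card_prod, h1, mul_one, Nat.card_pi]
    have h : ∏ᶠ i, a i = ∏ i ∈ S, a i :=
      finprod_eq_prod_of_mulSupport_subset a (by
        intro i hi; rw [Finset.mem_coe, hmemS]; exact hi)
    simp only [Nat.card_zmod]
    rw [h]
    exact Finset.prod_coe_sort S a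
  -- kernel of D equals kernel of cast to ZMod Δ
  let f : ZMod n →+ ZMod Δ := (ZMod.castHom hΔn (ZMod Δ)).toAddMonoidHom
  have hval : ∀ (m : ℕ) (h : m ∣ n) (x : ZMod n),
      ZMod.castHom h (ZMod m) x = ((x.val : ℕ) : ZMod m) := by
    intro m h x
    rw [ZMod.castHom_apply, ZMod.natCast_val]
  have hker : D.ker = f.ker := by
    ext x
    simp only [AddMonoidHom.mem_ker]
    constructor
    · intro hx
      have h1 : ∀ i, a i ∣ x.val := by
        intro i
        have := congrFun hx i
        rw [hD, hval] at this
        simpa using (ZMod.natCast_eq_zero_iff _ _).mp this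
      have h2 : Δ ∣ x.val := hΔ₂ _ h1
      show ZMod.castHom hΔn (ZMod Δ) x = 0
      rw [hval]
      exact (ZMod.natCast_eq_zero_iff _ _).mpr h2
    · intro hx
      have h2 : Δ ∣ x.val := by
        have : ZMod.castHom hΔn (ZMod Δ) x = 0 := hx
        rw [hval] at this
        exact (ZMod.natCast_eq_zero_iff _ _).mp this
      funext i
      rw [Pi.zero_apply, hD, hval]
      exact (ZMod.natCast_eq_zero_iff _ _).mpr ((hΔ₁ i).trans h2)
  -- f surjective
  have hfs : Function.Surjective f := by
    intro y
    refine ⟨((y.val : ℕ) : ZMod n), ?_⟩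
    show ZMod.castHom hΔn (ZMod Δ) _ = y
    rw [map_natCast, ZMod.natCast_zmod_val]
  have hrange : Nat.card D.range = Δ := by
    have e1 : (ZMod n ⧸ D.ker) ≃+ D.range := QuotientAddGroup.quotientKerEquivRange D
    have e2 : (ZMod n ⧸ f.ker) ≃+ ZMod Δ := QuotientAddGroup.quotientKerEquivOfSurjective f hfs
    rw [← Nat.card_congr e1.toEquiv, hker, Nat.card_congr e2.toEquiv, Nat.card_zmod]
  rw [← hrange, ← hcardPi]
  exact ⟨Quotient.finite _, (AddSubgroup.card_eq_card_quotient_mul_card_addSubgroup D.range).symm⟩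
end

section
/- Let n be a positive integer, ι an index type, S a subset of ι, and a, b : ι → ℕ families of positive integers such that: a i divides n for every i; a i = 1 for all but finitely many i; b i divides a i for every i; and b i = a i for every i ∈ S. Let D : ℤ/nℤ → ∏_i ℤ/(a i)ℤ and D' : ℤ/nℤ → ∏_i ℤ/(b i)ℤ be the diagonal homomorphisms whose components are the natural reduction maps, and let g : ∏_i ℤ/(a i)ℤ → ∏_i ℤ/(b i)ℤ be the componentwise reduction map, so that D' = g ∘ D. Then the sequence 0 → (ker D')/(ker D) → ker g → coker D → coker D' → 0 is exact, where the first map is induced by D (which carries ker D' into ker g and kills ker D), the second map is the restriction to ker g ⊆ ∏_i ℤ/(a i)ℤ of the quotient projection onto coker D, and the third map is induced by g. Moreover, (ker D')/(ker D) is cyclic of order Δ/Δ'', where Δ and Δ'' are the least common multiples of the families (a i) and (b i) respectively, and ker g is isomorphic to the product ∏_i ℤ/(a i / b i)ℤ (all but finitely many of whose factors are trivial). -/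
private lemma diag_ker_eq {ι : Type*} {n : ℕ} [NeZero n] {a : ι → ℕ}
    (han : ∀ i, a i ∣ n) {Δ : ℕ}
    (hΔ₁ : ∀ i, a i ∣ Δ) (hΔ₂ : ∀ m : ℕ, (∀ i, a i ∣ m) → Δ ∣ m)
    (D : ZMod n →+ ∀ i, ZMod (a i))
    (hD : ∀ (x : ZMod n) (i : ι), D x i = ZMod.castHom (han i) (ZMod (a i)) x) :
    D.ker = AddSubgroup.zmultiples ((Δ : ZMod n)) := by
  have hane : ∀ i, NeZero (a i) := fun i =>
    ⟨fun h => NeZero.ne n (Nat.eq_zero_of_zero_dvd (h ▸ han i))⟩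
  have hΔn : Δ ∣ n := hΔ₂ n han
  haveI : NeZero Δ := ⟨fun h => NeZero.ne n (Nat.eq_zero_of_zero_dvd (h ▸ hΔn))⟩
  ext x
  rw [AddMonoidHom.mem_ker, AddSubgroup.mem_zmultiples_iff]
  constructor
  · intro h
    have hdvd : Δ ∣ x.val := by
      refine hΔ₂ _ fun i => ?_
      haveI := hane i
      have hx : D x i = 0 := by rw [h]; rfl
      rwa [hD, ZMod.castHom_apply, ← ZMod.natCast_val,
        ZMod.natCast_eq_zero_iff] at hx
    refine ⟨((x.val / Δ : ℕ) : ℤ), ?_⟩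
    rw [natCast_zsmul, nsmul_eq_mul, ← Nat.cast_mul, Nat.div_mul_cancel hdvd,
      ZMod.natCast_val, ZMod.cast_id]
  · rintro ⟨k, rfl⟩
    have hcast : (ZMod.castHom hΔn (ZMod Δ)) (k • ((Δ : ZMod n))) = 0 := by
      rw [map_zsmul, map_natCast, ZMod.natCast_self, smul_zero]
    have hdvd : Δ ∣ (k • ((Δ : ZMod n))).val := by
      rwa [ZMod.castHom_apply, ← ZMod.natCast_val,
        ZMod.natCast_eq_zero_iff] at hcast
    funext i
    haveI := hane i
    rw [hD, ZMod.castHom_apply, ← ZMod.natCast_val]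
    show ((k • ((Δ : ZMod n))).val : ZMod (a i)) = 0
    rw [ZMod.natCast_eq_zero_iff]
    exact (hΔ₁ i).trans hdvd

private noncomputable def kerCastEquiv (m c : ℕ) [NeZero m] (hcm : c ∣ m) :
    ZMod (m / c) ≃+ ((ZMod.castHom hcm (ZMod c)).toAddMonoidHom.ker) := by
  haveI : NeZero c := ⟨fun h => NeZero.ne m (Nat.eq_zero_of_zero_dvd (h ▸ hcm))⟩
  have hcpos : 0 < c := Nat.pos_of_ne_zero (NeZero.ne c)
  haveI : NeZero (m / c) := NeZero.of_pos
    (Nat.div_pos (Nat.le_of_dvd (Nat.pos_of_ne_zero (NeZero.ne m)) hcm) hcpos)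
  have hcond : ((zmultiplesHom (ZMod m)) ((c : ZMod m))) ((m / c : ℕ) : ℤ) = 0 := by
    show ((m / c : ℕ) : ℤ) • ((c : ZMod m)) = 0
    rw [natCast_zsmul, nsmul_eq_mul, ← Nat.cast_mul, Nat.div_mul_cancel hcm,
      ZMod.natCast_self]
  set φ : ZMod (m / c) →+ ZMod m :=
    ZMod.lift (m / c) ⟨(zmultiplesHom (ZMod m)) ((c : ZMod m)), hcond⟩ with hφ
  have hval : ∀ k : ℕ, φ ((k : ZMod (m / c))) = ((k * c : ℕ) : ZMod m) := by
    intro k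
    have h1 : ((k : ZMod (m / c))) = (((k : ℤ) : ZMod (m / c))) := by push_cast; rfl
    rw [h1, hφ, ZMod.lift_coe]
    show ((k : ℤ)) • ((c : ZMod m)) = _
    rw [natCast_zsmul, nsmul_eq_mul, ← Nat.cast_mul]
  have hmem : ∀ x, φ x ∈ (ZMod.castHom hcm (ZMod c)).toAddMonoidHom.ker := by
    intro x
    rw [AddMonoidHom.mem_ker]
    have hx : x = ((x.val : ℕ) : ZMod (m / c)) := by
      rw [ZMod.natCast_val, ZMod.cast_id]
    show (ZMod.castHom hcm (ZMod c)) (φ x) = 0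
    rw [hx, hval, map_natCast, ZMod.natCast_eq_zero_iff]
    exact dvd_mul_left c x.val
  have hinj : Function.Injective φ := by
    rw [injective_iff_map_eq_zero]
    intro x hx0
    have hx : x = ((x.val : ℕ) : ZMod (m / c)) := by
      rw [ZMod.natCast_val, ZMod.cast_id]
    rw [hx, hval, ZMod.natCast_eq_zero_iff] at hx0
    have hm : m = (m / c) * c := (Nat.div_mul_cancel hcm).symm
    have hdvd : (m / c) ∣ x.val := (Nat.mul_dvd_mul_iff_right hcpos).mp (hm ▸ hx0)
    have hx0' : x.val = 0 := Nat.eq_zero_of_dvd_of_lt hdvd (ZMod.val_lt x)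
    rw [hx, hx0', Nat.cast_zero]
  have hsurj : ∀ z ∈ (ZMod.castHom hcm (ZMod c)).toAddMonoidHom.ker, ∃ x, φ x = z := by
    intro z hz
    rw [AddMonoidHom.mem_ker] at hz
    have hdvd : c ∣ z.val := by
      have h0 : (ZMod.castHom hcm (ZMod c)) z = 0 := hz
      rwa [ZMod.castHom_apply, ← ZMod.natCast_val,
        ZMod.natCast_eq_zero_iff] at h0
    refine ⟨((z.val / c : ℕ) : ZMod (m / c)), ?_⟩
    rw [hval, Nat.div_mul_cancel hdvd, ZMod.natCast_val, ZMod.cast_id]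
  exact AddEquiv.ofBijective (φ.codRestrict _ hmem)
    ⟨fun x y hxy => hinj (congrArg Subtype.val hxy), fun z => by
      obtain ⟨x, hx⟩ := hsurj z z.2; exact ⟨x, Subtype.ext hx⟩⟩

/-- **Kernel–cokernel exact sequence for two diagonal maps.**
Let `n` be a positive integer, `S` a subset of `ι`, and `a b : ι → ℕ` families of
positive integers with `a i ∣ n` for all `i`, `a i = 1` for all but finitely many
`i`, `b i ∣ a i` for all `i`, and `b i = a i` for `i ∈ S`.  Let
`D : ℤ/nℤ → ∏ i, ℤ/(a i)ℤ` and `D' : ℤ/nℤ → ∏ i, ℤ/(b i)ℤ` be the diagonal maps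
whose components are the natural reductions, and let
`g : ∏ i, ℤ/(a i)ℤ → ∏ i, ℤ/(b i)ℤ` be the componentwise reduction, so that
`D' = g ∘ D`.  Realizing `(ker D')/(ker D)` as any quotient `Q` of `ker D'` with
kernel `ker D`, and the cokernels of `D` and `D'` as quotients `C₁`, `C₂` of the
respective products (via surjections `p₁`, `p₂` with kernels `range D`,
`range D'`), the sequence
`0 → (ker D')/(ker D) → ker g → coker D → coker D' → 0`
is exact, where `φ₁` is induced by `D`, `φ₂` is the restriction of the projection
`p₁`, and `φ₃` is induced by `g`.  Moreover `(ker D')/(ker D)` is cyclic of order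
`Δ/Δ''`, where `Δ`, `Δ''` are the least common multiples of `(a i)`, `(b i)`
(characterized by their universal properties), and `ker g` is isomorphic to
`∏ i, ℤ/(a i / b i)ℤ`. -/
theorem six_term_for_diagonal_maps {ι : Type*} (n : ℕ) (hn : 0 < n) (S : Set ι)
    (a b : ι → ℕ)
    (hapos : ∀ i, 0 < a i) (han : ∀ i, a i ∣ n) (hafin : {i | a i ≠ 1}.Finite)
    (hbpos : ∀ i, 0 < b i) (hba : ∀ i, b i ∣ a i) (hS : ∀ i ∈ S, b i = a i)
    (Δ Δ'' : ℕ)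
    (hΔ₁ : ∀ i, a i ∣ Δ) (hΔ₂ : ∀ m : ℕ, (∀ i, a i ∣ m) → Δ ∣ m)
    (hΔ''₁ : ∀ i, b i ∣ Δ'') (hΔ''₂ : ∀ m : ℕ, (∀ i, b i ∣ m) → Δ'' ∣ m)
    (D : ZMod n →+ ∀ i, ZMod (a i))
    (hD : ∀ (x : ZMod n) (i : ι), D x i = ZMod.castHom (han i) (ZMod (a i)) x)
    (D' : ZMod n →+ ∀ i, ZMod (b i))
    (hD' : ∀ (x : ZMod n) (i : ι),
      D' x i = ZMod.castHom ((hba i).trans (han i)) (ZMod (b i)) x)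
    (g : (∀ i, ZMod (a i)) →+ ∀ i, ZMod (b i))
    (hg : ∀ (y : ∀ i, ZMod (a i)) (i : ι),
      g y i = ZMod.castHom (hba i) (ZMod (b i)) (y i))
    (hcomp : g.comp D = D')
    -- `Q` realizes the quotient `(ker D')/(ker D)`
    (Q : Type*) [AddCommGroup Q] (π : D'.ker →+ Q)
    (hπsurj : Function.Surjective π)
    (hπker : ∀ x : D'.ker, π x = 0 ↔ (x : ZMod n) ∈ D.ker)
    -- `C₁` realizes the cokernel of `D`
    (C₁ : Type*) [AddCommGroup C₁] (p₁ : (∀ i, ZMod (a i)) →+ C₁)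
    (hp₁surj : Function.Surjective p₁)
    (hp₁ker : ∀ y : ∀ i, ZMod (a i), p₁ y = 0 ↔ y ∈ D.range)
    -- `C₂` realizes the cokernel of `D'`
    (C₂ : Type*) [AddCommGroup C₂] (p₂ : (∀ i, ZMod (b i)) →+ C₂)
    (hp₂surj : Function.Surjective p₂)
    (hp₂ker : ∀ y : ∀ i, ZMod (b i), p₂ y = 0 ↔ y ∈ D'.range)
    -- `φ₁ : (ker D')/(ker D) → ker g` is induced by `D`
    (φ₁ : Q →+ g.ker)
    (hφ₁ : ∀ x : D'.ker, (φ₁ (π x) : ∀ i, ZMod (a i)) = D (x : ZMod n))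
    -- `φ₂ : ker g → coker D` is the restriction of the projection `p₁`
    (φ₂ : g.ker →+ C₁)
    (hφ₂ : ∀ y : g.ker, φ₂ y = p₁ (y : ∀ i, ZMod (a i)))
    -- `φ₃ : coker D → coker D'` is induced by `g`
    (φ₃ : C₁ →+ C₂)
    (hφ₃ : ∀ y : ∀ i, ZMod (a i), φ₃ (p₁ y) = p₂ (g y)) :
    Function.Injective φ₁ ∧
    (∀ y : g.ker, φ₂ y = 0 ↔ y ∈ Set.range φ₁) ∧
    (∀ c : C₁, φ₃ c = 0 ↔ c ∈ Set.range φ₂) ∧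
    Function.Surjective φ₃ ∧
    IsAddCyclic Q ∧ Nat.card Q = Δ / Δ'' ∧
    Nonempty (g.ker ≃+ ∀ i, ZMod (a i / b i)) := by
  
  classical
  haveI : NeZero n := ⟨hn.ne'⟩
  have hane : ∀ i, NeZero (a i) := fun i => ⟨(hapos i).ne'⟩
  have hbne : ∀ i, NeZero (b i) := fun i => ⟨(hbpos i).ne'⟩
  have hgD : ∀ x, g (D x) = D' x := fun x => by rw [← hcomp]; rfl
  have inj1 : Function.Injective φ₁ := by
    rw [injective_iff_map_eq_zero]
    intro q hq
    obtain ⟨x, rfl⟩ := hπsurj q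
    refine (hπker x).mpr ?_
    rw [AddMonoidHom.mem_ker, ← hφ₁ x, hq]
    rfl
  have ex2 : ∀ y : g.ker, φ₂ y = 0 ↔ y ∈ Set.range φ₁ := by
    intro y
    rw [hφ₂]
    constructor
    · intro h
      obtain ⟨x, hx⟩ := (hp₁ker _).mp h
      have hx' : x ∈ D'.ker := by
        rw [AddMonoidHom.mem_ker, ← hgD, hx]
        have hy := y.2
        rwa [AddMonoidHom.mem_ker] at hy
      exact ⟨π ⟨x, hx'⟩, Subtype.ext (by rw [hφ₁]; exact hx)⟩
    · rintro ⟨q, rfl⟩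
      obtain ⟨x, rfl⟩ := hπsurj q
      rw [show ((φ₁ (π x)) : ∀ i, ZMod (a i)) = D (x : ZMod n) from hφ₁ x]
      exact (hp₁ker _).mpr ⟨(x : ZMod n), rfl⟩
  have ex3 : ∀ c : C₁, φ₃ c = 0 ↔ c ∈ Set.range φ₂ := by
    intro cc
    obtain ⟨y, rfl⟩ := hp₁surj cc
    constructor
    · intro h
      rw [hφ₃] at h
      obtain ⟨x, hx⟩ := (hp₂ker _).mp h
      have hz : g (y - D x) = 0 := by rw [map_sub, hgD, hx, sub_self]
      refine ⟨⟨y - D x, AddMonoidHom.mem_ker.mpr hz⟩, ?_⟩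
      rw [hφ₂]
      show p₁ (y - D x) = p₁ y
      rw [map_sub, (hp₁ker (D x)).mpr ⟨x, rfl⟩, sub_zero]
    · rintro ⟨z, hz⟩
      have hzz := z.2
      rw [AddMonoidHom.mem_ker] at hzz
      rw [← hz, hφ₂, hφ₃, hzz, map_zero]
  have gsurj : Function.Surjective g := by
    intro z
    refine ⟨fun i => (((z i).val : ℕ) : ZMod (a i)), funext fun i => ?_⟩
    haveI := hbne i
    rw [hg, map_natCast, ZMod.natCast_val, ZMod.cast_id]
  have surj3 : Function.Surjective φ₃ := by
    intro c2
    obtain ⟨z, rfl⟩ := hp₂surj c2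
    obtain ⟨y, rfl⟩ := gsurj z
    exact ⟨p₁ y, hφ₃ y⟩
  have hΔn : Δ ∣ n := hΔ₂ n han
  have hΔ''Δ : Δ'' ∣ Δ := hΔ''₂ Δ fun i => (hba i).trans (hΔ₁ i)
  have hΔpos : 0 < Δ := Nat.pos_of_dvd_of_pos hΔn hn
  have hΔ''pos : 0 < Δ'' := Nat.pos_of_dvd_of_pos hΔ''Δ hΔpos
  have hkD : D.ker = AddSubgroup.zmultiples ((Δ : ZMod n)) := diag_ker_eq han hΔ₁ hΔ₂ D hD
  have hkD' : D'.ker = AddSubgroup.zmultiples ((Δ'' : ZMod n)) :=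
    diag_ker_eq (fun i => (hba i).trans (han i)) hΔ''₁ hΔ''₂ D' hD'
  have cardkD : Nat.card D.ker = n / Δ := by
    rw [hkD, Nat.card_zmultiples, ZMod.addOrderOf_coe _ (NeZero.ne n), Nat.gcd_eq_right hΔn]
  have cardkD' : Nat.card D'.ker = n / Δ'' := by
    rw [hkD', Nat.card_zmultiples, ZMod.addOrderOf_coe _ (NeZero.ne n),
      Nat.gcd_eq_right (hΔ''Δ.trans hΔn)]
  have hDle : D.ker ≤ D'.ker := fun x hx => by
    rw [AddMonoidHom.mem_ker] at hx ⊢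
    rw [← hgD, hx, map_zero]
  have hπk : π.ker = D.ker.addSubgroupOf D'.ker := by
    ext x
    rw [AddMonoidHom.mem_ker, hπker x, AddSubgroup.mem_addSubgroupOf]
  have cardπk : Nat.card (π.ker) = n / Δ := by
    rw [hπk, ← cardkD]
    exact Nat.card_congr (AddSubgroup.addSubgroupOfEquivOfLe hDle).toEquiv
  have cardeq : Nat.card D'.ker = Nat.card Q * Nat.card π.ker := by
    rw [← Nat.card_congr (QuotientAddGroup.quotientKerEquivOfSurjective π hπsurj).toEquiv]
    exact AddSubgroup.card_eq_card_quotient_mul_card_addSubgroup π.ker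
  obtain ⟨t, ht⟩ := hΔ''Δ
  obtain ⟨k, hk⟩ := hΔn
  have hkpos : 0 < k := by
    rcases Nat.eq_zero_or_pos k with h | h
    · subst h; rw [Nat.mul_zero] at hk; omega
    · exact h
  have hnΔ : n / Δ = k := by rw [hk, Nat.mul_div_cancel_left _ hΔpos]
  have hnΔ'' : n / Δ'' = t * k := by
    rw [hk, ht, Nat.mul_assoc, Nat.mul_div_cancel_left _ hΔ''pos]
  have hΔdiv : Δ / Δ'' = t := by rw [ht, Nat.mul_div_cancel_left _ hΔ''pos]
  have cardQ : Nat.card Q = Δ / Δ'' := by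
    rw [cardkD', hnΔ'', cardπk, hnΔ] at cardeq
    rw [hΔdiv]
    exact Nat.eq_of_mul_eq_mul_right hkpos cardeq.symm
  have cyc : IsAddCyclic Q := isAddCyclic_of_surjective π hπsurj
  have e2 : ∀ i, ZMod (a i / b i) ≃+ ((ZMod.castHom (hba i) (ZMod (b i))).toAddMonoidHom.ker) :=
    fun i => haveI := hane i; kerCastEquiv (a i) (b i) (hba i)
  have e1 : g.ker ≃+ ∀ i, ((ZMod.castHom (hba i) (ZMod (b i))).toAddMonoidHom.ker) :=
    { toFun := fun y i => ⟨(y : ∀ i, ZMod (a i)) i, by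
        rw [AddMonoidHom.mem_ker]
        show ZMod.castHom (hba i) (ZMod (b i)) ((y : ∀ i, ZMod (a i)) i) = 0
        rw [← hg (y : ∀ i, ZMod (a i)) i]
        have hy := y.2
        rw [AddMonoidHom.mem_ker] at hy
        rw [hy]
        rfl⟩
      invFun := fun z => ⟨fun i => (z i : ZMod (a i)), by
        rw [AddMonoidHom.mem_ker]
        have h : ∀ i, g (fun j => (z j : ZMod (a j))) i = 0 := fun i => by
          rw [hg]
          exact AddMonoidHom.mem_ker.mp (z i).2
        exact funext h⟩
      left_inv := fun y => rfl
      right_inv := fun z => rfl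
      map_add' := fun y y' => rfl }
  exact ⟨inj1, ex2, ex3, surj3, cyc, cardQ,
    ⟨e1.trans (AddEquiv.piCongrRight fun i => (e2 i).symm)⟩⟩
end
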